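/- arXiv:0811.4361 — 3 statements merged into one kernel-verified Lean document; each statement's English description precedes it below -/
import Mathlib

section
/- With f as defined from the Thue-Morse sequence, for every odd integer n ≥ 1, f(n) = (n/2)(a+b) + ((a−b)/2)·η_{n−1}. -/
/-- Binary digit sum. -/
def binDigitSum (n : ℕ) : ℕ := (Nat.digits 2 n).sum

/-- The ±1 Thue–Morse sequence, as a real number. -/
noncomputable def tm (n : ℕ) : ℝ := (-1) ^ (binDigitSum n)

/-- The Thue–Morse point-set function `f`. -/
noncomputable def tmPoint (a b : ℝ) (n : ℕ) : ℝ :=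
  ∑ m ∈ Finset.range n, ((a + b) / 2 + (a - b) / 2 * tm m)

lemma binDigitSum_two_mul_add_one (m : ℕ) :
    binDigitSum (2 * m + 1) = binDigitSum m + 1 := by
  unfold binDigitSum
  rw [Nat.digits_def' (by norm_num) (by omega)]
  have h2 : (2 * m + 1) / 2 = m := by omega
  have h3 : (2 * m + 1) % 2 = 1 := by omega
  rw [h2, h3]
  simp [Nat.add_comm]

lemma binDigitSum_two_mul (m : ℕ) (hm : 0 < m) :
    binDigitSum (2 * m) = binDigitSum m := by
  unfold binDigitSum
  rw [Nat.digits_def' (by norm_num) (by omega)]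
  simp [Nat.mul_div_cancel_left]

lemma tm_pair (m : ℕ) : tm (2 * m) + tm (2 * m + 1) = 0 := by
  unfold tm
  rcases Nat.eq_zero_or_pos m with h | h
  · subst h; simp [binDigitSum]
  · rw [binDigitSum_two_mul m h, binDigitSum_two_mul_add_one m, pow_succ]
    ring

lemma tm_sum_even (k : ℕ) : ∑ m ∈ Finset.range (2 * k), tm m = 0 := by
  induction k with
  | zero => simp
  | succ k ih =>
    have : 2 * (k + 1) = (2 * k + 1) + 1 := by ring
    rw [this, Finset.sum_range_succ, Finset.sum_range_succ, ih]
    have := tm_pair k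
    linarith

theorem stmt_3 (a b : ℝ) (hb : 0 < b) (hba : b < a) :
    ∀ n : ℕ, 1 ≤ n → Odd n →
      tmPoint a b n = (n : ℝ) / 2 * (a + b) + (a - b) / 2 * tm (n - 1) := by
  rintro n hn ⟨k, rfl⟩
  unfold tmPoint
  rw [Finset.sum_add_distrib, Finset.sum_const, ← Finset.mul_sum, Finset.card_range]
  have h1 : 2 * k + 1 - 1 = 2 * k := by omega
  rw [h1, Finset.sum_range_succ, tm_sum_even, zero_add]
  push_cast
  ring
end

section
/- For every n ≥ 0 and every real k, |Σ_{j=0}^{2^n − 1} η_j e^{−2πi j k}|² = 2^n · Π_{j=0}^{n−1} (1 − cos(2π 2^j k)). -/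
open Complex Real

/-- The ±1 Thue–Morse sequence, as a complex number. -/
noncomputable def tmC (n : ℕ) : ℂ := (-1) ^ (binDigitSum n)

/-!
Writing `w = exp (-2πik)`, the sum is `∑_{j < 2^n} η_j w^j`, and since `η_{2^n + j} = -η_j` for
`j < 2^n` this generating polynomial factors as `∏_{i < n} (1 - w^{2^i})`. Each factor has
squared modulus `|1 - exp (iθ)|² = 2 (1 - cos θ)` with `θ = -2π 2^i k`.
-/

theorem binDigitSum_two_pow_add {n j : ℕ} (hj : j < 2 ^ n) :
    binDigitSum (2 ^ n + j) = binDigitSum j + 1 := by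
  have hlen : (Nat.digits 2 j).length ≤ n := (Nat.digits_length_le_iff one_lt_two j).mpr hj
  have hdigits := Nat.digits_append_zeroes_append_digits (n := j) (m := 1)
    (k := n - (Nat.digits 2 j).length) one_lt_two one_pos
  rw [Nat.add_sub_cancel' hlen, mul_one, add_comm] at hdigits
  rw [binDigitSum, binDigitSum, ← hdigits]
  simp

theorem tmC_two_pow_add {n j : ℕ} (hj : j < 2 ^ n) : tmC (2 ^ n + j) = -tmC j := by
  rw [tmC, tmC, binDigitSum_two_pow_add hj, pow_succ, mul_neg_one]

theorem sum_range_two_pow_tmC_mul_pow (n : ℕ) (w : ℂ) :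
    ∑ j ∈ Finset.range (2 ^ n), tmC j * w ^ j = ∏ i ∈ Finset.range n, (1 - w ^ 2 ^ i) := by
  induction n with
  | zero => simp [tmC, binDigitSum]
  | succ n ih =>
    have hupper : ∑ j ∈ Finset.range (2 ^ n), tmC (2 ^ n + j) * w ^ (2 ^ n + j)
        = -w ^ 2 ^ n * ∑ j ∈ Finset.range (2 ^ n), tmC j * w ^ j := by
      rw [Finset.mul_sum]
      refine Finset.sum_congr rfl fun j hj ↦ ?_
      rw [tmC_two_pow_add (Finset.mem_range.mp hj), pow_add]
      ring
    rw [pow_succ, mul_two, Finset.sum_range_add, hupper, ih, Finset.prod_range_succ]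
    ring

theorem sq_norm_one_sub_exp_ofReal_mul_I (θ : ℝ) :
    ‖1 - exp (θ * I)‖ ^ 2 = 2 * (1 - Real.cos θ) := by
  rw [Complex.sq_norm, normSq_apply, exp_mul_I, ← ofReal_cos, ← ofReal_sin]
  simp only [sub_re, sub_im, add_re, add_im, mul_re, mul_im, one_re, one_im, ofReal_re, ofReal_im,
    I_re, I_im]
  linear_combination Real.sin_sq_add_cos_sq θ

theorem stmt_8 (n : ℕ) (k : ℝ) :
    ‖(∑ j ∈ Finset.range (2 ^ n),
        tmC j * Complex.exp (-2 * Real.pi * Complex.I * j * k))‖ ^ 2 =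
      2 ^ n * ∏ j ∈ Finset.range n, (1 - Real.cos (2 * Real.pi * 2 ^ j * k)) := by
  have hexp (j : ℕ) : exp (-2 * π * I * j * k) = exp (-2 * π * I * k) ^ j := by
    rw [← Complex.exp_nat_mul]
    ring_nf
  have hfactor (i : ℕ) : exp (-2 * π * I * k) ^ 2 ^ i = exp (↑(-(2 * π * 2 ^ i * k)) * I) := by
    rw [← Complex.exp_nat_mul]
    push_cast
    ring_nf
  simp_rw [hexp, sum_range_two_pow_tmC_mul_pow, norm_prod, ← Finset.prod_pow, hfactor,
    sq_norm_one_sub_exp_ofReal_mul_I, Real.cos_neg, Finset.prod_mul_distrib, Finset.prod_const,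
    Finset.card_range]
end

section
/- Let p be an odd prime, s the multiplicative order of 2 modulo p, and for each coset a⟨2⟩ of the subgroup ⟨2⟩ ≤ (ℤ/pℤ)* define ξ_a = (−2i)^s Π_{j ∈ a⟨2⟩} sin(2πj/p). Then the product of ξ_a over all cosets a⟨2⟩ of ⟨2⟩ in (ℤ/pℤ)* equals p. -/
open scoped Classical

open Finset in
lemma units_prod_val {p : ℕ} [Fact p.Prime] {M : Type*} [CommMonoid M] (f : ℕ → M) :
    ∏ u : (ZMod p)ˣ, f ((u : ZMod p).val) = ∏ k ∈ Finset.range (p - 1), f (k + 1) := by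
  have hp : p.Prime := Fact.out
  refine Finset.prod_bij (fun u _ => ((u : ZMod p)).val - 1) ?_ ?_ ?_ ?_
  · intro u _
    have h1 : ((u : ZMod p)).val < p := ZMod.val_lt _
    have h0 : ((u : ZMod p)).val ≠ 0 := by
      simp [ZMod.val_eq_zero, Units.ne_zero]
    simp only [Finset.mem_range]
    omega
  · intro u _ v _ h
    have h0u : ((u : ZMod p)).val ≠ 0 := by simp [ZMod.val_eq_zero, Units.ne_zero]
    have h0v : ((v : ZMod p)).val ≠ 0 := by simp [ZMod.val_eq_zero, Units.ne_zero]
    have : ((u : ZMod p)).val = ((v : ZMod p)).val := by omega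
    exact Units.ext (ZMod.val_injective p this)
  · intro k hk
    simp only [Finset.mem_range] at hk
    have hlt : k + 1 < p := by omega
    have hval : ((k + 1 : ℕ) : ZMod p).val = k + 1 := ZMod.val_cast_of_lt hlt
    have hne : ((k + 1 : ℕ) : ZMod p) ≠ 0 := by
      intro h
      rw [h, ZMod.val_zero] at hval
      omega
    refine ⟨Units.mk0 _ hne, Finset.mem_univ _, ?_⟩
    dsimp only [Units.val_mk0]
    rw [hval]
    omega
  · intro u _
    have h0 : ((u : ZMod p)).val ≠ 0 := by simp [ZMod.val_eq_zero, Units.ne_zero]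
    congr 1
    omega

theorem stmt_18 (p : ℕ) [Fact p.Prime] (hodd : Odd p) (h2 : Nat.Coprime 2 p)
    (H : Subgroup (ZMod p)ˣ) (hH : H = Subgroup.zpowers (ZMod.unitOfCoprime 2 h2))
    (s : ℕ) (hs : s = orderOf (ZMod.unitOfCoprime 2 h2))
    (R : Finset (ZMod p)ˣ)
    (hR : ∀ u : (ZMod p)ˣ, ∃! a : (ZMod p)ˣ, a ∈ R ∧ ∃ h ∈ H, u = a * h) :
    ∏ a ∈ R, ((-2 * Complex.I) ^ s *
        ∏ h : H, Complex.sin (2 * Real.pi * (((a * (h : (ZMod p)ˣ)) : (ZMod p)ˣ) : ZMod p).val / p))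
      = (p : ℂ) := by
  have hp : p.Prime := Fact.out
  have hp1 : 1 < p := hp.one_lt
  have hpne : (p : ℕ) ≠ 0 := hp.ne_zero
  have hpC : (p : ℂ) ≠ 0 := by exact_mod_cast Nat.cast_ne_zero.mpr hpne
  set ζ : ℂ := Complex.exp (2 * Real.pi * Complex.I / p) with hζdef
  have hζ : IsPrimitiveRoot ζ p := Complex.isPrimitiveRoot_exp p hpne
  have hζp : ζ ^ p = 1 := hζ.pow_eq_one
  have hexp : ∀ v : ℕ, Complex.exp ((2 * Real.pi * (v : ℂ) / p) * Complex.I) = ζ ^ v := by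
    intro v
    rw [hζdef, ← Complex.exp_nat_mul]
    congr 1
    ring
  have hexpneg : ∀ v : ℕ, v ≤ p →
      Complex.exp (-((2 * Real.pi * (v : ℂ) / p) * Complex.I)) = ζ ^ (p - v) := by
    intro v hv
    rw [hζdef, ← Complex.exp_nat_mul]
    rw [show ((p - v : ℕ) : ℂ) * (2 * Real.pi * Complex.I / p)
        = 2 * Real.pi * Complex.I + -(2 * Real.pi * (v : ℂ) / p * Complex.I) by
      push_cast [Nat.cast_sub hv]
      field_simp
      ring]
    rw [Complex.exp_add, Complex.exp_two_pi_mul_I, one_mul]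
  set g : (ZMod p)ˣ → ℂ :=
    fun u => ζ ^ (p - ((u : ZMod p)).val) - ζ ^ (((u : ZMod p)).val) with hgdef
  have hsin : ∀ u : (ZMod p)ˣ,
      (-2 * Complex.I) * Complex.sin (2 * Real.pi * (((u : ZMod p)).val : ℂ) / p) = g u := by
    intro u
    set v : ℕ := ((u : ZMod p)).val with hv
    have hvle : v ≤ p := le_of_lt (ZMod.val_lt _)
    rw [hgdef]
    dsimp only
    rw [Complex.sin, ← hexp v, ← hexpneg v hvle]
    rw [show ((2 : ℂ) * Real.pi * (v : ℂ) / p) * Complex.I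
        = (2 * Real.pi * (v : ℂ) / p) * Complex.I by ring]
    ring_nf
    rw [Complex.I_sq]
    ring
  -- exponent congruence mod p
  have hFnat : ∀ a : ℕ, ζ ^ a = ζ ^ (((a : ZMod p)).val) := by
    intro a
    conv_lhs => rw [← Nat.div_add_mod a p]
    rw [pow_add, pow_mul, hζp, one_pow, one_mul, ZMod.val_natCast]
  have hFeq : ∀ a b : ℕ, ((a : ZMod p) = (b : ZMod p)) → ζ ^ a = ζ ^ b := by
    intro a b hab
    rw [hFnat a, hFnat b, hab]
  -- Step A : reduce to a product over all units
  have hcard : s = Fintype.card H := by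
    rw [hs, hH]
    exact (Fintype.card_zpowers).symm
  have stepA : (∏ a ∈ R, ((-2 * Complex.I) ^ s *
        ∏ h : H, Complex.sin (2 * Real.pi * (((a * (h : (ZMod p)ˣ)) : (ZMod p)ˣ) : ZMod p).val / p)))
      = ∏ u : (ZMod p)ˣ, g u := by
    have h1 : ∀ a ∈ R, ((-2 * Complex.I) ^ s *
        ∏ h : H, Complex.sin (2 * Real.pi * (((a * (h : (ZMod p)ˣ)) : (ZMod p)ˣ) : ZMod p).val / p))
        = ∏ h : H, g (a * (h : (ZMod p)ˣ)) := by
      intro a _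
      rw [hcard, ← Finset.card_univ, ← Finset.prod_const, ← Finset.prod_mul_distrib]
      exact Finset.prod_congr rfl fun h _ => hsin (a * (h : (ZMod p)ˣ))
    rw [Finset.prod_congr rfl h1, ← Finset.prod_product']
    refine Finset.prod_bij (fun x _ => x.1 * (x.2 : (ZMod p)ˣ)) (fun _ _ => Finset.mem_univ _)
      ?_ ?_ (fun _ _ => rfl)
    · rintro ⟨a₁, h₁⟩ hx ⟨a₂, h₂⟩ hy hxy
      dsimp only at hxy
      rw [Finset.mem_product] at hx hy
      obtain ⟨c, -, hcu⟩ := hR (a₁ * (h₁ : (ZMod p)ˣ))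
      have e1 : a₁ = c := hcu a₁ ⟨hx.1, (h₁ : (ZMod p)ˣ), h₁.2, rfl⟩
      have e2 : a₂ = c := hcu a₂ ⟨hy.1, (h₂ : (ZMod p)ˣ), h₂.2, hxy⟩
      have ea : a₁ = a₂ := e1.trans e2.symm
      subst ea
      have : (h₁ : (ZMod p)ˣ) = (h₂ : (ZMod p)ˣ) := mul_left_cancel hxy
      simp [Subtype.ext this]
    · intro u _
      obtain ⟨a, ⟨haR, h, hh, hu⟩, -⟩ := hR u
      exact ⟨(a, ⟨h, hh⟩), Finset.mk_mem_product haR (Finset.mem_univ _), hu.symm⟩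
  rw [stepA]
  -- Step B: compute the product over all units
  obtain ⟨m, hm⟩ := hodd
  have hfact : ∀ u : (ZMod p)ˣ, g u =
      ζ ^ (p - ((u : ZMod p)).val) * (1 - ζ ^ (((u : ZMod p)).val + ((u : ZMod p)).val)) := by
    intro u
    set v : ℕ := ((u : ZMod p)).val with hv
    have hvle : v ≤ p := le_of_lt (ZMod.val_lt _)
    rw [hgdef]
    dsimp only
    rw [mul_sub, mul_one, ← pow_add, show p - v + (v + v) = p + v by omega, pow_add, hζp, one_mul]
  have split : ∏ u : (ZMod p)ˣ, g u =
      (∏ u : (ZMod p)ˣ, ζ ^ (p - ((u : ZMod p)).val)) *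
        ∏ u : (ZMod p)ˣ, (1 - ζ ^ (((u : ZMod p)).val + ((u : ZMod p)).val)) := by
    rw [← Finset.prod_mul_distrib]
    exact Finset.prod_congr rfl fun u _ => hfact u
  rw [split]
  -- first factor is 1
  have P1 : (∏ u : (ZMod p)ˣ, ζ ^ (p - ((u : ZMod p)).val)) = 1 := by
    rw [units_prod_val (fun k => ζ ^ (p - k)), Finset.prod_pow_eq_pow_sum]
    have hsum : ∑ k ∈ Finset.range (p - 1), (p - (k + 1)) = p * m := by
      have h1 : ∑ k ∈ Finset.range (p - 1), (p - (k + 1))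
          = ∑ k ∈ Finset.range (p - 1), ((p - 1) - 1 - k + 1) := by
        refine Finset.sum_congr rfl fun k hk => ?_
        simp only [Finset.mem_range] at hk
        omega
      rw [h1, Finset.sum_range_reflect (fun j => j + 1) (p - 1)]
      have h2 : ∑ i ∈ Finset.range p, i = ∑ k ∈ Finset.range (p - 1), (k + 1) := by
        conv_lhs => rw [show p = (p - 1) + 1 by omega]
        rw [Finset.sum_range_succ']
        simp
      have h3 := Finset.sum_range_id_mul_two p
      rw [h2] at h3
      have h4 : (∑ k ∈ Finset.range (p - 1), (k + 1)) * 2 = (p * m) * 2 := by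
        rw [h3, hm]
        simp only [Nat.add_sub_cancel]
        ring
      exact Nat.eq_of_mul_eq_mul_right (by norm_num) h4
    rw [hsum, pow_mul, hζp, one_pow]
  rw [P1, one_mul]
  -- second factor is p
  set g2 : (ZMod p)ˣ := ZMod.unitOfCoprime 2 h2 with hg2
  have h2u : ∀ u : (ZMod p)ˣ,
      (1 - ζ ^ (((u : ZMod p)).val + ((u : ZMod p)).val))
        = 1 - ζ ^ ((((g2 * u : (ZMod p)ˣ) : ZMod p)).val) := by
    intro u
    congr 1
    apply hFeq
    have hxx : ∀ x : ZMod p, ((x.val : ℕ) : ZMod p) = x := ZMod.natCast_rightInverse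
    rw [Nat.cast_add, hxx, hxx, Units.val_mul, hg2, ZMod.coe_unitOfCoprime]
    push_cast
    ring
  have P2 : (∏ u : (ZMod p)ˣ, (1 - ζ ^ (((u : ZMod p)).val + ((u : ZMod p)).val))) = (p : ℂ) := by
    rw [Finset.prod_congr rfl fun u _ => h2u u]
    have hre : (∏ u : (ZMod p)ˣ, (1 - ζ ^ ((((g2 * u : (ZMod p)ˣ) : ZMod p)).val)))
        = ∏ v : (ZMod p)ˣ, (1 - ζ ^ (((v : ZMod p)).val)) :=
      Fintype.prod_equiv (Equiv.mulLeft g2) _ _ (fun u => rfl)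
    rw [hre, units_prod_val (fun k => 1 - ζ ^ k)]
    have hζ' : IsPrimitiveRoot ζ ((p - 1) + 1) := by
      rwa [Nat.sub_add_cancel hp1.le]
    have := hζ'.prod_one_sub_pow_eq_order
    rw [this]
    push_cast [Nat.cast_sub hp1.le]
    ring
  exact P2
end
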